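/- arXiv:math/0203161 — 2 statements merged into one kernel-verified Lean document; each statement's English description precedes it below -/
import Mathlib

section
/- Let Γ = {(g, b₋, b₊, h, c₊, c₋) ∈ G × B₋ × B₊ × G × B₊ × B₋ : c₊h = gb₊ and c₋h = gb₋}. The map μ⁻¹(1) → Γ sending (C₁, b₋, b₊, C₂, c₊, c₋) with C₁⁻¹b₋⁻¹b₊C₁C₂⁻¹c₊⁻¹c₋C₂ = 1 to (g, b₋, b₊, h, c₊, c₋), where h = C₂C₁⁻¹ and g = c₋hb₋⁻¹, is well defined (i.e. the relation c₊h = gb₊ follows from the moment map condition μ = 1), surjective, and its fibers are exactly the orbits of the diagonal right G-action (C₁, C₂) ↦ (C₁g', C₂g'). -/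
open Matrix

/-- The identification `(C̃₁ ⊛ C̃₂) ⫽ G ≅ Γ` with the Lu–Weinstein symplectic
double groupoid: the map `μ⁻¹(1) → Γ` sending `(C₁, b₋, b₊, C₂, c₊, c₋)` with
`μ = C₁⁻¹b₋⁻¹b₊C₁ · C₂⁻¹c₊⁻¹c₋C₂ = 1` to `(g, b₋, b₊, h, c₊, c₋)`, where
`h = C₂C₁⁻¹` and `g = c₋hb₋⁻¹`, is well defined (the relation `c₊h = gb₊`
follows from `μ = 1`; the relation `c₋h = gb₋` holds by definition of `g`),
surjective onto `Γ = {(g, b₋, b₊, h, c₊, c₋) : c₊h = gb₊, c₋h = gb₋}`, and its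
fibers are exactly the orbits of the diagonal right `G`-action
`(C₁, C₂) ↦ (C₁g', C₂g')`. -/
theorem moment_fibration_to_double_groupoid {n : ℕ}
    (bm bp cp cm : Matrix (Fin n) (Fin n) ℂ)
    (hbm : IsUnit bm) (hbp : IsUnit bp) (hcp : IsUnit cp) (hcm : IsUnit cm)
    (hbmL : ∀ i j : Fin n, i < j → bm i j = 0)
    (hbpU : ∀ i j : Fin n, j < i → bp i j = 0)
    (hcpU : ∀ i j : Fin n, j < i → cp i j = 0)
    (hcmL : ∀ i j : Fin n, i < j → cm i j = 0) :
    -- well-definedness: the moment map condition μ = 1 implies c₊h = gb₊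
    (∀ C₁ C₂ : Matrix (Fin n) (Fin n) ℂ, IsUnit C₁ → IsUnit C₂ →
      (C₁⁻¹ * bm⁻¹ * bp * C₁) * (C₂⁻¹ * cp⁻¹ * cm * C₂) = 1 →
      cp * (C₂ * C₁⁻¹) = (cm * (C₂ * C₁⁻¹) * bm⁻¹) * bp)
    -- surjectivity onto Γ:
    ∧ (∀ g h : Matrix (Fin n) (Fin n) ℂ, IsUnit g → IsUnit h →
      cp * h = g * bp → cm * h = g * bm →
      ∃ C₁ C₂ : Matrix (Fin n) (Fin n) ℂ, IsUnit C₁ ∧ IsUnit C₂ ∧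
        h = C₂ * C₁⁻¹ ∧ g = cm * (C₂ * C₁⁻¹) * bm⁻¹ ∧
        (C₁⁻¹ * bm⁻¹ * bp * C₁) * (C₂⁻¹ * cp⁻¹ * cm * C₂) = 1)
    -- the fibers are exactly the diagonal right G-orbits:
    ∧ (∀ C₁ C₂ C₁' C₂' : Matrix (Fin n) (Fin n) ℂ,
        IsUnit C₁ → IsUnit C₂ → IsUnit C₁' → IsUnit C₂' →
        ((C₂ * C₁⁻¹ = C₂' * C₁'⁻¹ ∧
          cm * (C₂ * C₁⁻¹) * bm⁻¹ = cm * (C₂' * C₁'⁻¹) * bm⁻¹)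
          ↔ ∃ g' : Matrix (Fin n) (Fin n) ℂ, IsUnit g' ∧
              C₁' = C₁ * g' ∧ C₂' = C₂ * g')) := by

  have kc : ∀ A X : Matrix (Fin n) (Fin n) ℂ, IsUnit A → A * (A⁻¹ * X) = X := by
    intro A X hA
    rw [← Matrix.mul_assoc, Matrix.mul_nonsing_inv A ((Matrix.isUnit_iff_isUnit_det A).mp hA),
      Matrix.one_mul]
  have kc' : ∀ A X : Matrix (Fin n) (Fin n) ℂ, IsUnit A → A⁻¹ * (A * X) = X := by
    intro A X hA
    rw [← Matrix.mul_assoc, Matrix.nonsing_inv_mul A ((Matrix.isUnit_iff_isUnit_det A).mp hA),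
      Matrix.one_mul]
  have kr : ∀ A : Matrix (Fin n) (Fin n) ℂ, IsUnit A → A * A⁻¹ = 1 :=
    fun A hA => Matrix.mul_nonsing_inv A ((Matrix.isUnit_iff_isUnit_det A).mp hA)
  have kr' : ∀ A : Matrix (Fin n) (Fin n) ℂ, IsUnit A → A⁻¹ * A = 1 :=
    fun A hA => Matrix.nonsing_inv_mul A ((Matrix.isUnit_iff_isUnit_det A).mp hA)
  refine ⟨?_, ?_, ?_⟩
  · intro C₁ C₂ hC₁ hC₂ hmom
    have h2 : (C₂⁻¹ * cp⁻¹ * cm * C₂) * (C₁⁻¹ * bm⁻¹ * bp * C₁) = 1 :=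
      mul_eq_one_comm.mp hmom
    have e : cp * C₂ * ((C₂⁻¹ * cp⁻¹ * cm * C₂) * (C₁⁻¹ * bm⁻¹ * bp * C₁)) * C₁⁻¹
        = cp * (C₂ * C₁⁻¹) := by
      rw [h2, Matrix.mul_one, Matrix.mul_assoc]
    rw [← e]
    simp only [Matrix.mul_assoc]
    rw [kc _ _ hC₂, kc _ _ hcp, kr _ hC₁, Matrix.mul_one]
  · intro g h hg hh hgp hgm
    refine ⟨1, h, isUnit_one, hh, by rw [inv_one, Matrix.mul_one], ?_, ?_⟩
    · rw [inv_one, Matrix.mul_one, hgm, Matrix.mul_assoc, kr _ hbm, Matrix.mul_one]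
    · have hcm' : cm = g * bm * h⁻¹ := by
        rw [← hgm, Matrix.mul_assoc, kr _ hh, Matrix.mul_one]
      have hcp' : cp = g * bp * h⁻¹ := by
        rw [← hgp, Matrix.mul_assoc, kr _ hh, Matrix.mul_one]
      rw [inv_one, Matrix.mul_one, Matrix.one_mul, hcm', hcp',
        Matrix.mul_inv_rev, Matrix.mul_inv_rev, Matrix.nonsing_inv_nonsing_inv h
          ((Matrix.isUnit_iff_isUnit_det h).mp hh)]
      simp only [Matrix.mul_assoc]
      rw [kr' _ hh, Matrix.mul_one, kc' _ _ hg, kc' _ _ hh, kc _ _ hbp, kr' _ hbm]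
  · intro C₁ C₂ C₁' C₂' hC₁ hC₂ hC₁' hC₂'
    constructor
    · rintro ⟨heq, -⟩
      refine ⟨C₁⁻¹ * C₁', (Matrix.isUnit_nonsing_inv_iff.mpr hC₁).mul hC₁', ?_, ?_⟩
      · rw [kc _ _ hC₁]
      · rw [← Matrix.mul_assoc, heq, Matrix.mul_assoc, kr' _ hC₁', Matrix.mul_one]
    · rintro ⟨g', hg', rfl, rfl⟩
      have h1 : C₂ * C₁⁻¹ = C₂ * g' * (C₁ * g')⁻¹ := by
        rw [Matrix.mul_inv_rev, Matrix.mul_assoc, kc _ _ hg']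
      exact ⟨h1, by rw [h1]⟩
end

section
/- Let A₀ ∈ t be a regular diagonal matrix and k ≥ 2. Define, for a nonzero complex direction d on an anti-Stokes ray, the set of roots supporting d: roots β = e_i − e_j with β(A₀)/z^{k−1} ∈ ℝ₊ for z on d. If a₁, …, a_l are l consecutive anti-Stokes directions spanning an open half-period sector of angle π/(k−1), then the union R₊ of the roots supporting a₁, …, a_l is a system of positive roots: for every root β, exactly one of β, −β belongs to R₊. -/
/-!
Substituting `ψ = (k − 1)φ` turns the condition on `a_i − a_j` into membership in the cone
over the half-open arc of arguments `[ψ₀, ψ₀ + π)`, `ψ₀ = (k − 1)φ₀`, i.e. a half-open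
half-plane. Regularity makes `a_i − a_j` nonzero, and negation shifts its argument by `π`;
reducing arguments modulo `2π` into `[ψ₀, ψ₀ + 2π)`, exactly one of `±(a_i − a_j)` lands in
the first half of that window.
-/

open Complex

/-- The set `R₊` of roots `β_{ij}(X) = x_i − x_j` of `gl(n, ℂ)` supporting some
anti-Stokes direction in the half-open arc `[φ₀, φ₀ + π/(k−1))` of directions:
`(i, j) ∈ R₊` iff `i ≠ j` and `(a_i − a_j)/z^{k−1} ∈ ℝ₊` for some direction
`z = e^{iφ}` with `φ₀ ≤ φ < φ₀ + π/(k−1)`. -/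
def supportedRoots {n : ℕ} (a : Fin n → ℂ) (k : ℕ) (φ₀ : ℝ) :
    Set (Fin n × Fin n) :=
  {p | p.1 ≠ p.2 ∧ ∃ φ : ℝ, φ₀ ≤ φ ∧ φ < φ₀ + Real.pi / (k - 1) ∧
    ∃ r : ℝ, 0 < r ∧
      a p.1 - a p.2 = (r : ℂ) * (Complex.exp (φ * Complex.I)) ^ (k - 1)}

open scoped Real

def arcCone (ψ₀ ℓ : ℝ) : Set ℂ :=
  {c | ∃ ψ : ℝ, ψ₀ ≤ ψ ∧ ψ < ψ₀ + ℓ ∧ ∃ r : ℝ, 0 < r ∧ c = (r : ℂ) * exp (ψ * I)}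

theorem toIcoMod_add_half_lt_iff {α : Type*} [CommRing α] [LinearOrder α]
    [IsStrictOrderedRing α] [Archimedean α] {q : α} (hp : 0 < 2 * q) (a b : α) :
    toIcoMod hp a (b + q) < a + q ↔ a + q ≤ toIcoMod hp a b := by
  set u := toIcoMod hp a b with hu
  obtain ⟨⟨hau, hua⟩, n, hb⟩ := (toIcoMod_eq_iff hp).mp hu.symm
  have hshift : toIcoMod hp a (b + q) = toIcoMod hp a (u + q) := by
    rw [hb, add_right_comm, toIcoMod_add_zsmul]
  rw [hshift]
  rcases lt_or_ge u (a + q) with h | h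
  · rw [(toIcoMod_eq_self hp).mpr ⟨by linarith, by linarith⟩]
    constructor <;> intro <;> linarith
  · rw [show u + q = u - q + 2 * q by ring, toIcoMod_add_right,
      (toIcoMod_eq_self hp).mpr ⟨by linarith, by linarith⟩]
    constructor <;> intro <;> linarith

theorem mem_arcCone_iff {ψ₀ ℓ : ℝ} (hℓ : ℓ ≤ 2 * π) {c : ℂ} :
    c ∈ arcCone ψ₀ ℓ ↔ c ≠ 0 ∧ toIcoMod Real.two_pi_pos ψ₀ (arg c) < ψ₀ + ℓ := by
  constructor
  · rintro ⟨ψ, hψ₀, hψ, r, hr, rfl⟩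
    refine ⟨mul_ne_zero (ofReal_ne_zero.mpr hr.ne') (exp_ne_zero _), ?_⟩
    rwa [arg_real_mul _ hr, arg_exp_mul_I, toIcoMod_toIocMod,
      (toIcoMod_eq_self _).mpr ⟨hψ₀, by linarith⟩]
  · rintro ⟨hc, h⟩
    refine ⟨_, (toIcoMod_mem_Ico _ _ _).1, h, ‖c‖, norm_pos_iff.mpr hc, ?_⟩
    rw [← self_sub_toIcoDiv_zsmul, ofReal_sub, ofReal_zsmul, ofReal_mul, ofReal_ofNat,
      exp_mul_I_periodic.sub_zsmul_eq, norm_mul_exp_arg_mul_I]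

theorem neg_mem_arcCone_pi_iff {ψ₀ : ℝ} {c : ℂ} (hc : c ≠ 0) :
    -c ∈ arcCone ψ₀ π ↔ c ∉ arcCone ψ₀ π := by
  have hπ : π ≤ 2 * π := by linarith [Real.pi_pos]
  have harg : toIcoMod Real.two_pi_pos ψ₀ (arg (-c)) =
      toIcoMod Real.two_pi_pos ψ₀ (arg c + π) := by
    obtain ⟨n, hn⟩ := Real.Angle.angle_eq_iff_two_pi_dvd_sub.mp
      ((arg_neg_coe_angle hc).trans (Real.Angle.coe_add _ _).symm)
    exact (toIcoMod_eq_toIcoMod _).mpr ⟨-n, by rw [zsmul_eq_mul]; push_cast; linarith⟩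
  rw [mem_arcCone_iff hπ, mem_arcCone_iff hπ, harg, toIcoMod_add_half_lt_iff]
  simp [hc, not_lt]

theorem exists_pow_eq_iff_mem_arcCone {K : ℕ} (hK : 0 < K) (c : ℂ) (φ₀ ℓ : ℝ) :
    (∃ φ : ℝ, φ₀ ≤ φ ∧ φ < φ₀ + ℓ ∧ ∃ r : ℝ, 0 < r ∧ c = (r : ℂ) * exp (φ * I) ^ K) ↔
      c ∈ arcCone (K * φ₀) (K * ℓ) := by
  have hK' : (0 : ℝ) < K := by exact_mod_cast hK
  have hpow (φ : ℝ) : exp (φ * I) ^ K = exp ((K * φ : ℝ) * I) := by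
    rw [← exp_nat_mul]; push_cast; ring_nf
  constructor
  · rintro ⟨φ, h₀, h₁, r, hr, rfl⟩
    exact ⟨K * φ, by gcongr, by rw [← mul_add]; gcongr, r, hr, by rw [hpow]⟩
  · rintro ⟨ψ, h₀, h₁, r, hr, rfl⟩
    refine ⟨ψ / K, ?_, ?_, r, hr, by rw [hpow, mul_div_cancel₀ _ hK'.ne']⟩
    · rwa [le_div_iff₀ hK', mul_comm]
    · rwa [div_lt_iff₀ hK', add_mul, mul_comm φ₀, mul_comm ℓ]

theorem mem_supportedRoots_iff {n k : ℕ} (hk : 2 ≤ k) (a : Fin n → ℂ) (φ₀ : ℝ)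
    (p : Fin n × Fin n) :
    p ∈ supportedRoots a k φ₀ ↔
      p.1 ≠ p.2 ∧ a p.1 - a p.2 ∈ arcCone ((k - 1 : ℕ) * φ₀) π := by
  have hK : 0 < k - 1 := by omega
  rw [supportedRoots, Set.mem_ofPred_eq, ← Nat.cast_pred (by omega : 0 < k),
    exists_pow_eq_iff_mem_arcCone hK, mul_div_cancel₀ _ (by positivity)]

/-- Let `A₀ = diag(a)` be regular (`a` injective) and `k ≥ 2`.  The roots
supporting the anti-Stokes directions lying in a half-period arc of angle
`π/(k−1)` form a system of positive roots: for every root `β` of `gl(n, ℂ)`,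
exactly one of `β`, `−β` belongs to `R₊`.  (Rotation by `π/(k−1)` changes the
sign of `z^{k−1}`, exchanging the roots supporting a direction with their
negatives.) -/
theorem supportedRoots_positive_system {n k : ℕ} (hk : 2 ≤ k)
    (a : Fin n → ℂ) (ha : Function.Injective a) (φ₀ : ℝ) :
    ∀ i j : Fin n, i ≠ j →
      ((i, j) ∈ supportedRoots a k φ₀ ↔ (j, i) ∉ supportedRoots a k φ₀) := by
  intro i j hij
  have hc : a i - a j ≠ 0 := sub_ne_zero.mpr (ha.ne hij)
  rw [mem_supportedRoots_iff hk, mem_supportedRoots_iff hk, ← neg_sub (a i) (a j),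
    neg_mem_arcCone_pi_iff hc]
  simp [hij, hij.symm]
end
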